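/- arXiv:2110.10210 — 2 statements merged into one kernel-verified Lean document; each statement's English description precedes it below -/
import Mathlib

section
/- Let Z be a real n×m matrix, v ∈ R^n and u ∈ R^m unit vectors, β > 0, and let x > 0 be a real number that is not a singular value of Z. Define A(x) = ⟨v, (x − ZZᵀ/x)^{-1} v⟩, B(x) = ⟨v, (x − ZZᵀ/x)^{-1}(Z/x) u⟩, and C(x) = ⟨u, (x − ZᵀZ/x)^{-1} u⟩. Then x is a singular value of βvuᵀ + Z if and only if (1/β − B(x))² = A(x)·C(x). -/
open Matrix

/-- `x` is a singular value of the real rectangular matrix `M` when `x²` is an eigenvalue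
of `M * Mᴴ`. -/
def IsSingularValue {n m : ℕ} (M : Matrix (Fin n) (Fin m) ℝ) (x : ℝ) : Prop :=
  ∃ w : Fin n → ℝ, w ≠ 0 ∧ (M * Mᴴ) *ᵥ w = x ^ 2 • w

lemma sv_iff_det_aux {n m : ℕ} (M : Matrix (Fin n) (Fin m) ℝ) (x : ℝ) :
    IsSingularValue M x ↔ (x ^ 2 • (1 : Matrix (Fin n) (Fin n) ℝ) - M * Mᴴ).det = 0 := by
  rw [← Matrix.exists_mulVec_eq_zero_iff]
  unfold IsSingularValue
  refine exists_congr fun w => and_congr_right fun _ => ?_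
  rw [Matrix.sub_mulVec, Matrix.smul_mulVec, Matrix.one_mulVec, sub_eq_zero, eq_comm]

noncomputable def UmAux {n : ℕ} (v W : Fin n → ℝ) : Matrix (Fin n) (Fin 2) ℝ :=
  Matrix.of fun i j => ![v i, W i] j

noncomputable def VmAux {n : ℕ} (v W : Fin n → ℝ) (β : ℝ) : Matrix (Fin 2) (Fin n) ℝ :=
  Matrix.of fun j i => ![β ^ 2 * v i + β * W i, β * v i] j

lemma UmAux_mul_VmAux {n : ℕ} (v W : Fin n → ℝ) (β : ℝ) : UmAux v W * VmAux v W β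
    = β ^ 2 • vecMulVec v v + β • vecMulVec v W + β • vecMulVec W v := by
  ext i k
  simp [UmAux, VmAux, Matrix.mul_apply, Fin.sum_univ_two, vecMulVec_apply]
  ring

lemma mul_UmAux {n : ℕ} (E : Matrix (Fin n) (Fin n) ℝ) (v W : Fin n → ℝ) :
    E * UmAux v W = UmAux (E *ᵥ v) (E *ᵥ W) := by
  ext i k
  fin_cases k <;> simp [UmAux, Matrix.mul_apply, Matrix.mulVec, dotProduct]

lemma VmAux_mul_UmAux {n : ℕ} (v W p q : Fin n → ℝ) (β : ℝ) :
    VmAux v W β * UmAux p q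
      = Matrix.of fun j k =>
          ![![β ^ 2 * (v ⬝ᵥ p) + β * (W ⬝ᵥ p), β ^ 2 * (v ⬝ᵥ q) + β * (W ⬝ᵥ q)],
            ![β * (v ⬝ᵥ p), β * (v ⬝ᵥ q)]] j k := by
  ext j k
  fin_cases j <;> fin_cases k <;>
    simp [UmAux, VmAux, Matrix.mul_apply, dotProduct, Finset.mul_sum,
      ← Finset.sum_add_distrib, add_mul] <;>
    exact Finset.sum_congr rfl fun i _ => by ring

lemma det_sub_aux {n : ℕ} (D E : Matrix (Fin n) (Fin n) ℝ) (U : Matrix (Fin n) (Fin 2) ℝ)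
    (V : Matrix (Fin 2) (Fin n) ℝ) (hDE : D * E = 1) :
    (D - U * V).det = D.det * (1 - V * (E * U)).det := by
  have h2 : D * (E * U * V) = U * V := by
    rw [← Matrix.mul_assoc, ← Matrix.mul_assoc, hDE, Matrix.one_mul]
  have : D - U * V = D * (1 + (E * U) * (-V)) := by
    rw [Matrix.mul_add, Matrix.mul_one]; simp only [Matrix.mul_neg]
    rw [h2, ← sub_eq_add_neg]
  rw [this, Matrix.det_mul, Matrix.det_one_add_mul_comm, Matrix.neg_mul, ← sub_eq_add_neg]

lemma det_fin_two_one_sub (G : Matrix (Fin 2) (Fin 2) ℝ) :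
    (1 - G).det = (1 - G 0 0) * (1 - G 1 1) - G 0 1 * G 1 0 := by
  rw [Matrix.det_fin_two]
  simp [Matrix.sub_apply, Matrix.one_apply]

/-- master equation: let `x > 0` not be a singular value of `Z`, and set
`A(x) = ⟨v, (x - ZZᵀ/x)⁻¹ v⟩`, `B(x) = ⟨v, (x - ZZᵀ/x)⁻¹ (Z/x) u⟩`,
`C(x) = ⟨u, (x - ZᵀZ/x)⁻¹ u⟩`. Then `x` is a singular value of `β v uᵀ + Z` if and only if
`(1/β - B(x))² = A(x)·C(x)`. -/
theorem isSingularValue_rank_one_perturbation_iff_master_equation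
    (n m : ℕ)
    (Z : Matrix (Fin n) (Fin m) ℝ)
    (v : Fin n → ℝ) (u : Fin m → ℝ)
    (hv : ∑ i, (v i) ^ 2 = 1) (hu : ∑ j, (u j) ^ 2 = 1)
    (β : ℝ) (hβ : 0 < β)
    (x : ℝ) (hx : 0 < x)
    (hxZ : ¬ IsSingularValue Z x)
    (A B C : ℝ)
    (hA : A = v ⬝ᵥ ((x • (1 : Matrix (Fin n) (Fin n) ℝ) - x⁻¹ • (Z * Zᴴ))⁻¹ *ᵥ v))
    (hB : B = v ⬝ᵥ ((x • (1 : Matrix (Fin n) (Fin n) ℝ) - x⁻¹ • (Z * Zᴴ))⁻¹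
      *ᵥ ((x⁻¹ • Z) *ᵥ u)))
    (hC : C = u ⬝ᵥ ((x • (1 : Matrix (Fin m) (Fin m) ℝ) - x⁻¹ • (Zᴴ * Z))⁻¹ *ᵥ u)) :
    IsSingularValue (β • Matrix.vecMulVec v u + Z) x ↔ (1 / β - B) ^ 2 = A * C := by
  have hx0 : x ≠ 0 := ne_of_gt hx
  have hβ0 : β ≠ 0 := ne_of_gt hβ
  set W : Fin n → ℝ := Z *ᵥ u with hW
  set D : Matrix (Fin n) (Fin n) ℝ := x ^ 2 • 1 - Z * Zᴴ with hD
  have hdet : D.det ≠ 0 := by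
    intro h0
    rw [← Matrix.exists_mulVec_eq_zero_iff] at h0
    obtain ⟨w, hw0, hw⟩ := h0
    refine hxZ ⟨w, hw0, ?_⟩
    rw [hD, Matrix.sub_mulVec, Matrix.smul_mulVec, Matrix.one_mulVec, sub_eq_zero] at hw
    exact hw.symm
  set E := D⁻¹ with hE
  have hDE : D * E = 1 := Matrix.mul_nonsing_inv D (isUnit_iff_ne_zero.mpr hdet)
  have hDh : Dᴴ = D := by
    rw [hD]
    simp [Matrix.conjTranspose_sub, Matrix.conjTranspose_smul, Matrix.conjTranspose_mul]
  have hsymm : ∀ y z : Fin n → ℝ, y ⬝ᵥ (E *ᵥ z) = z ⬝ᵥ (E *ᵥ y) := by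
    intro y z
    have hEh : Eᵀ = E := by
      have h : (D⁻¹)ᴴ = D⁻¹ := by rw [Matrix.conjTranspose_nonsing_inv, hDh]
      exact h
    rw [Matrix.dotProduct_mulVec, ← Matrix.mulVec_transpose, dotProduct_comm, hEh]
  set a := v ⬝ᵥ (E *ᵥ v) with ha
  set b := v ⬝ᵥ (E *ᵥ W) with hb
  set c := W ⬝ᵥ (E *ᵥ W) with hc
  -- values of A, B, C
  have hfact : x • (1 : Matrix (Fin n) (Fin n) ℝ) - x⁻¹ • (Z * Zᴴ) = x⁻¹ • D := by
    rw [hD, smul_sub, smul_smul]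
    congr 1
    rw [show x⁻¹ * x ^ 2 = x by field_simp]
  have hinv1 : (x⁻¹ • D)⁻¹ = x • E :=
    Matrix.inv_eq_right_inv (by
      rw [Matrix.smul_mul, Matrix.mul_smul, hDE, smul_smul, inv_mul_cancel₀ hx0, one_smul])
  have hAv : A = x * a := by
    rw [hA, hfact, hinv1, Matrix.smul_mulVec, dotProduct_smul, smul_eq_mul, ha]
  have hBv : B = b := by
    rw [hB, hfact, hinv1, Matrix.smul_mulVec, Matrix.smul_mulVec,
      Matrix.mulVec_smul, dotProduct_smul, dotProduct_smul, smul_eq_mul, smul_eq_mul,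
      ← mul_assoc, mul_inv_cancel₀ hx0, one_mul, hb]
  have hDm : (x ^ 2 • (1 : Matrix (Fin m) (Fin m) ℝ) - Zᴴ * Z)
      * ((x ^ 2)⁻¹ • (1 + Zᴴ * E * Z)) = 1 := by
    have h1 : (x ^ 2 • (1 : Matrix (Fin m) (Fin m) ℝ) - Zᴴ * Z) * Zᴴ = Zᴴ * D := by
      rw [hD]
      simp [Matrix.sub_mul, Matrix.mul_sub, Matrix.smul_mul, Matrix.mul_smul, Matrix.mul_assoc]
    calc (x ^ 2 • (1 : Matrix (Fin m) (Fin m) ℝ) - Zᴴ * Z) * ((x ^ 2)⁻¹ • (1 + Zᴴ * E * Z))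
        = (x ^ 2)⁻¹ • ((x ^ 2 • 1 - Zᴴ * Z)
            + ((x ^ 2 • 1 - Zᴴ * Z) * Zᴴ) * (E * Z)) := by
          rw [Matrix.mul_smul, Matrix.mul_add, Matrix.mul_one]
          congr 2
          simp only [Matrix.mul_assoc]
      _ = (x ^ 2)⁻¹ • ((x ^ 2 • 1 - Zᴴ * Z) + Zᴴ * Z) := by
          rw [h1, Matrix.mul_assoc, ← Matrix.mul_assoc _ E, hDE, Matrix.one_mul]
      _ = 1 := by
          rw [sub_add_cancel, smul_smul, inv_mul_cancel₀ (pow_ne_zero 2 hx0), one_smul]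
  have hfactm : x • (1 : Matrix (Fin m) (Fin m) ℝ) - x⁻¹ • (Zᴴ * Z)
      = x⁻¹ • (x ^ 2 • 1 - Zᴴ * Z) := by
    rw [smul_sub, smul_smul]
    congr 1
    rw [show x⁻¹ * x ^ 2 = x by field_simp]
  have hinvm : (x⁻¹ • (x ^ 2 • (1 : Matrix (Fin m) (Fin m) ℝ) - Zᴴ * Z))⁻¹
      = x • ((x ^ 2)⁻¹ • (1 + Zᴴ * E * Z)) :=
    Matrix.inv_eq_right_inv (by
      rw [Matrix.smul_mul, Matrix.mul_smul, hDm, smul_smul, inv_mul_cancel₀ hx0, one_smul])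
  have huu : u ⬝ᵥ u = 1 := by
    rw [← hu]
    exact Finset.sum_congr rfl fun j _ => (sq (u j)).symm
  have hCv : C = x⁻¹ * (1 + c) := by
    rw [hC, hfactm, hinvm, Matrix.smul_mulVec, Matrix.smul_mulVec,
      dotProduct_smul, dotProduct_smul]
    have h3 : (1 + Zᴴ * E * Z) *ᵥ u = u + Zᴴ *ᵥ (E *ᵥ W) := by
      rw [Matrix.add_mulVec, Matrix.one_mulVec]
      congr 1
      rw [← Matrix.mulVec_mulVec, ← Matrix.mulVec_mulVec, hW]
    have h4 : u ⬝ᵥ (Zᴴ *ᵥ (E *ᵥ W)) = c := by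
      rw [Matrix.dotProduct_mulVec, ← Matrix.mulVec_transpose, hc]
      congr 1
    rw [h3, dotProduct_add, huu, h4, smul_eq_mul, smul_eq_mul, ← mul_assoc]
    congr 1
    rw [sq, mul_inv, ← mul_assoc, mul_inv_cancel₀ hx0, one_mul]
  -- decomposition of the perturbed matrix
  have hMM : x ^ 2 • (1 : Matrix (Fin n) (Fin n) ℝ)
      - (β • Matrix.vecMulVec v u + Z) * (β • Matrix.vecMulVec v u + Z)ᴴ
      = D - UmAux v W * VmAux v W β := by
    have hexp : (β • Matrix.vecMulVec v u + Z) * (β • Matrix.vecMulVec v u + Z)ᴴ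
        = Z * Zᴴ + β ^ 2 • vecMulVec v v + β • vecMulVec v W + β • vecMulVec W v := by
      ext i k
      simp only [Matrix.mul_apply, Matrix.add_apply, Matrix.smul_apply,
        Matrix.conjTranspose_apply, Matrix.vecMulVec_apply, smul_eq_mul, Matrix.mulVec,
        dotProduct, star_trivial, hW]
      have expand : ∀ l, (β * (v i * u l) + Z i l) * (β * (v k * u l) + Z k l)
          = β ^ 2 * (v i * v k) * (u l) ^ 2 + β * (v i * (Z k l * u l))
            + β * (v k * (Z i l * u l)) + Z i l * Z k l := by intro l; ring
      rw [Finset.sum_congr rfl fun l _ => expand l]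
      simp only [Finset.sum_add_distrib, ← Finset.mul_sum, hu]
      ring
    rw [hexp, UmAux_mul_VmAux, hD]
    abel
  rw [sv_iff_det_aux, hMM, det_sub_aux D E _ _ hDE, mul_UmAux, VmAux_mul_UmAux,
    det_fin_two_one_sub]
  simp only [Matrix.of_apply, Matrix.cons_val_zero, Matrix.cons_val_one, Matrix.head_cons,
    Matrix.head_fin_const]
  rw [hsymm W v, ← ha, ← hb, ← hc, mul_eq_zero]
  have hkey : (1 - (β ^ 2 * a + β * b)) * (1 - β * b) - (β ^ 2 * b + β * c) * (β * a)
      = β ^ 2 * ((1 / β - b) ^ 2 - a * (1 + c)) := by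
    field_simp
    ring
  have hAC : A * C = a * (1 + c) := by
    rw [hAv, hCv]
    field_simp
  rw [hkey, hAC, hBv]
  constructor
  · rintro (h | h)
    · exact absurd h hdet
    · have := mul_eq_zero.mp h
      rcases this with h1 | h2
      · exact absurd h1 (pow_ne_zero 2 hβ0)
      · linarith [sub_eq_zero.mp h2]
  · intro h
    right
    rw [show (1 / β - b) ^ 2 - a * (1 + c) = 0 from by rw [h]; ring, mul_zero]
end

section
/- Let φ ≥ 1, τ > 0 be real numbers, and let x > 0 and m be real numbers with x ≠ m, satisfying the quadratic equation m² + ((φ² − 1)/x − x)·m + 1 = 0 together with m/(x − m) = τ/φ. Then x = sqrt(φ² + (τ + 1/τ)·φ + 1) and m = x/(1 + φ/τ). -/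
/-! The ratio condition is linear in `m` and gives `m (τ + φ) = τ x`. Substituting this into the
quadratic, cleared of denominators, leaves `x (τ φ x² - (φ² - 1) τ (τ + φ) - (τ + φ)²) = 0`, and the
second factor is `τ φ` times `x² - (φ² + (τ + 1/τ) φ + 1)`. -/

section Field

variable {K : Type*} [Field K] {φ τ x m : K}

theorem mul_add_eq_of_div_sub_eq (hφ : φ ≠ 0) (hxm : x ≠ m) (h : m / (x - m) = τ / φ) :
    m * (τ + φ) = τ * x := by
  rw [div_eq_div_iff (sub_ne_zero.mpr hxm) hφ] at h
  linear_combination h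

theorem add_ne_zero_of_mul_add_eq (hx : x ≠ 0) (hτ : τ ≠ 0) (hm : m * (τ + φ) = τ * x) :
    τ + φ ≠ 0 := by
  rintro hs
  rw [hs, mul_zero] at hm
  exact mul_ne_zero hτ hx hm.symm

theorem eq_div_one_add_div_of_mul_add_eq (hx : x ≠ 0) (hτ : τ ≠ 0)
    (hm : m * (τ + φ) = τ * x) : m = x / (1 + φ / τ) := by
  have hs := add_ne_zero_of_mul_add_eq hx hτ hm
  rw [one_add_div hτ, div_div_eq_mul_div, eq_div_iff hs]
  linear_combination hm

theorem sq_eq_of_quadratic_of_mul_add_eq (hx : x ≠ 0) (hτ : τ ≠ 0) (hφ : φ ≠ 0)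
    (hm : m * (τ + φ) = τ * x) (hquad : m ^ 2 + ((φ ^ 2 - 1) / x - x) * m + 1 = 0) :
    x ^ 2 = φ ^ 2 + (τ + 1 / τ) * φ + 1 := by
  have hpoly : x * m ^ 2 + (φ ^ 2 - 1 - x ^ 2) * m + x = 0 := by
    field_simp at hquad
    linear_combination hquad
  have hfactor : x * (τ * φ * x ^ 2 - ((φ ^ 2 - 1) * τ * (τ + φ) + (τ + φ) ^ 2)) = 0 := by
    linear_combination (-(τ + φ) ^ 2) * hpoly
      + (x * m * (τ + φ) + x * τ * x + (φ ^ 2 - 1 - x ^ 2) * (τ + φ)) * hm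
  have hsq : τ * φ * x ^ 2 = (φ ^ 2 - 1) * τ * (τ + φ) + (τ + φ) ^ 2 :=
    sub_eq_zero.mp ((mul_eq_zero.mp hfactor).resolve_left hx)
  apply mul_left_cancel₀ (mul_ne_zero hτ hφ)
  rw [hsq]
  field_simp
  ring

end Field

/-- if `φ ≥ 1`, `τ > 0`, `x > 0`, `x ≠ m`, and `x, m` satisfy the quadratic
equation `m² + ((φ² − 1)/x − x)·m + 1 = 0` together with `m/(x − m) = τ/φ`, then
`x = sqrt(φ² + (τ + 1/τ)·φ + 1)` and `m = x/(1 + φ/τ)`. -/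
theorem solve_master_system
    (φ τ x m : ℝ) (hφ : 1 ≤ φ) (hτ : 0 < τ) (hx : 0 < x) (hxm : x ≠ m)
    (hquad : m ^ 2 + ((φ ^ 2 - 1) / x - x) * m + 1 = 0)
    (hratio : m / (x - m) = τ / φ) :
    x = Real.sqrt (φ ^ 2 + (τ + 1 / τ) * φ + 1) ∧ m = x / (1 + φ / τ) := by
  have hφ0 : φ ≠ 0 := (zero_lt_one.trans_le hφ).ne'
  have hm := mul_add_eq_of_div_sub_eq hφ0 hxm hratio
  refine ⟨?_, eq_div_one_add_div_of_mul_add_eq hx.ne' hτ.ne' hm⟩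
  rw [← sq_eq_of_quadratic_of_mul_add_eq hx.ne' hτ.ne' hφ0 hm hquad, Real.sqrt_sq hx.le]
end
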